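/- arXiv:1803.10102 — 3 statements merged into one kernel-verified Lean document; each statement's English description precedes it below -/
import Mathlib

section
/- Let p ≥ 3 be a prime and let i, M be integers with 1 ≤ i ≤ M. If M − i ≤ v_p(M!) − v_p(i!), then κ_p · i ≥ M. -/
/-- arithmetic core of Lemma 3.5 of Balakrishnan–Dogra,
"An effective Chabauty–Kim theorem".
Let `p ≥ 3` be prime and `1 ≤ i ≤ M` integers.  If `M − i ≤ v_p(M!) − v_p(i!)`, then
`κ_p · i ≥ M`, where `κ_p = 1 + ((p−1)/(p−2))·(1/log p)`. -/
theorem kappa_mul_ge_of_padicVal_factorial (p : ℕ) (hp : p.Prime) (hp3 : 3 ≤ p)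
    (i M : ℕ) (hi : 1 ≤ i) (hiM : i ≤ M)
    (h : (M : ℝ) - (i : ℝ) ≤
      (padicValNat p (Nat.factorial M) : ℝ) - (padicValNat p (Nat.factorial i) : ℝ)) :
    (M : ℝ) ≤ (1 + ((p : ℝ) - 1) / ((p : ℝ) - 2) * (1 / Real.log p)) * (i : ℝ) := by
  haveI : Fact p.Prime := ⟨hp⟩
  -- digit sum of M is at least 1
  have hM1 : 1 ≤ M := le_trans hi hiM
  have hs : 1 ≤ (p.digits M).sum := by
    have hne : p.digits M ≠ [] := Nat.digits_ne_nil_iff_ne_zero.mpr (by omega)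
    have hlast : (p.digits M).getLast hne ≠ 0 := Nat.getLast_digit_ne_zero p (by omega)
    calc 1 ≤ (p.digits M).getLast hne := Nat.one_le_iff_ne_zero.mpr hlast
      _ ≤ (p.digits M).sum :=
        List.single_le_sum (fun x _ => Nat.zero_le x) _ (List.getLast_mem hne)
  -- Legendre: (p-1) * v_p(M!) = M - digitsum ≤ M - 1
  have hleg : (p - 1) * padicValNat p (Nat.factorial M) ≤ M - 1 := by
    rw [sub_one_mul_padicValNat_factorial M]
    omega
  -- hence v_p(M!) ≤ (M-1)/(p-1) in ℝ
  have hp2R : (2 : ℝ) < (p : ℝ) := by exact_mod_cast lt_of_lt_of_le (by norm_num) hp3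
  have hp1R : (0 : ℝ) < (p : ℝ) - 1 := by linarith
  have hvM : ((p : ℝ) - 1) * (padicValNat p (Nat.factorial M) : ℝ) ≤ (M : ℝ) - 1 := by
    have := hleg
    have hcast : (((p - 1) * padicValNat p (Nat.factorial M) : ℕ) : ℝ) ≤ ((M - 1 : ℕ) : ℝ) := by
      exact_mod_cast this
    push_cast [Nat.cast_sub (by omega : 1 ≤ p), Nat.cast_sub hM1] at hcast
    linarith
  -- from h: (M - i)(p-1) ≤ M - 1, hence M(p-2) ≤ i(p-1) - 1 ≤ i(p-1)
  have hvi : (0 : ℝ) ≤ (padicValNat p (Nat.factorial i) : ℝ) := Nat.cast_nonneg _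
  have key : ((M : ℝ) - i) * ((p : ℝ) - 1) ≤ (M : ℝ) - 1 := by
    nlinarith [h, hvM, hvi]
  -- so M ≤ (p-1)/(p-2) * i
  have hstep : (M : ℝ) ≤ ((p : ℝ) - 1) / ((p : ℝ) - 2) * (i : ℝ) := by
    rw [div_mul_eq_mul_div, le_div_iff₀ (by linarith)]
    nlinarith [key]
  -- and (p-1)/(p-2) ≤ 1 + (p-1)/((p-2) log p) since log p ≤ p - 1
  have hlogp : Real.log p ≤ (p : ℝ) - 1 := by
    have := Real.log_le_sub_one_of_pos (x := (p : ℝ)) (by linarith)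
    linarith
  have hlogpos : 0 < Real.log p := Real.log_pos (by linarith)
  have hcoef : ((p : ℝ) - 1) / ((p : ℝ) - 2) ≤
      1 + ((p : ℝ) - 1) / ((p : ℝ) - 2) * (1 / Real.log p) := by
    have h1 : (1 : ℝ) ≤ ((p : ℝ) - 1) / Real.log p := by
      rw [le_div_iff₀ hlogpos]; linarith
    have h2 : ((p : ℝ) - 1) / ((p : ℝ) - 2) * (1 / Real.log p)
        = ((p : ℝ) - 1) / Real.log p * (1 / ((p : ℝ) - 2)) := by ring
    have h3 : (1 : ℝ) / ((p : ℝ) - 2) ≤ ((p : ℝ) - 1) / Real.log p * (1 / ((p : ℝ) - 2)) :=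
      le_mul_of_one_le_left (one_div_nonneg.mpr (by linarith)) h1
    have h4 : ((p : ℝ) - 1) / ((p : ℝ) - 2) = 1 + 1 / ((p : ℝ) - 2) := by
      have hne : (p:ℝ) - 2 ≠ 0 := by linarith
      field_simp
      ring
    rw [h2, h4]
    linarith
  calc (M : ℝ) ≤ ((p : ℝ) - 1) / ((p : ℝ) - 2) * (i : ℝ) := hstep
    _ ≤ (1 + ((p : ℝ) - 1) / ((p : ℝ) - 2) * (1 / Real.log p)) * (i : ℝ) := by
        apply mul_le_mul_of_nonneg_right hcoef (Nat.cast_nonneg _)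
end

section
/- Let p ≥ 3 be a prime, let G ∈ ℚ_p[[x]], and let D = Σ_{i=0}^N g_i (d/dx)^i be a nice differential operator of order N. Let M ≥ 2 be an integer such that: C_M(G) ≠ 0; for every j ≤ M, either C_j(G) = 0 or v_p(C_j(G)) ≥ v_p(C_M(G)) + (M − j); and for every j > M with C_j(G) ≠ 0, v_p(C_j(G)) > v_p(C_M(G)) − (j − M) (i.e. M is the length of the slope ≤ −1 part of the Newton polygon of G). Suppose that the set {v_p(C_i(D(G))) : i ≥ 0, C_i(D(G)) ≠ 0} is nonempty and attains a minimum, and let s be the least index i at which this minimum is attained. Then M < κ_p · (N + s). -/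
/-!
Comparing coefficients of `x^k` in `F = D(G)` gives a triangular system: `k! · C_k(F)` is the
unit `C_0(g_N)` times `(k + N)! · C_{k+N}(G)` plus `ℤ_p`-combinations of `j! · C_j(G)` with
`j < k + N` (because `j!` divides `k!` times the ascending factorial produced by differentiating).
Hence every `|j! · C_j(G)|` is bounded by the largest of `|C_k(F)|` and `|C_j(G)|` for `j < N`.
By minimality of `s` all `|C_k(F)| ≤ |C_s(F)|`, and `C_s(F)` only involves `C_j(G)` for
`j ≤ N + s`; the Newton polygon bounds all these by `|C_M(G)| p^{-(M - N - s)}`. Taking `j = M`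
gives `p^{M - N - s} ∣ M!`, and Legendre's formula yields `(p - 1)(M - N - s) ≤ M`, which implies
the claim because `log p < p - 1`.
-/

open PowerSeries

/-- The action of the differential operator `D = Σ_{i=0}^N g_i (d/dx)^i` on a power series
over `ℚ_p`. -/
noncomputable def diffOpApply (p : ℕ) [Fact p.Prime] (N : ℕ)
    (g : ℕ → PowerSeries ℚ_[p]) (G : PowerSeries ℚ_[p]) : PowerSeries ℚ_[p] :=
  ∑ i ∈ Finset.range (N + 1), g i * (⇑(PowerSeries.derivative ℚ_[p]))^[i] G

open scoped Nat
open Finset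

theorem IsUltrametricDist.norm_le_of_norm_sum_le {ι E : Type*} [SeminormedAddCommGroup E]
    [IsUltrametricDist E] [DecidableEq ι] {s : Finset ι} {f : ι → E} {i : ι} {C : ℝ}
    (hi : i ∈ s) (hsum : ‖∑ j ∈ s, f j‖ ≤ C) (hrest : ∀ j ∈ s.erase i, ‖f j‖ ≤ C) :
    ‖f i‖ ≤ C := by
  have hC : 0 ≤ C := (norm_nonneg _).trans hsum
  rw [← add_sum_erase s f hi] at hsum
  calc ‖f i‖ = ‖(f i + ∑ j ∈ s.erase i, f j) + -∑ j ∈ s.erase i, f j‖ := by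
        rw [add_neg_cancel_right]
    _ ≤ max ‖f i + ∑ j ∈ s.erase i, f j‖ ‖-∑ j ∈ s.erase i, f j‖ := norm_add_le_max _ _
    _ ≤ C := max_le hsum (by rw [norm_neg]; exact norm_sum_le_of_forall_le_of_nonneg hC hrest)

theorem IsUltrametricDist.norm_natCast_mul_le_of_dvd {R : Type*} [SeminormedRing R]
    [NormOneClass R] [IsUltrametricDist R] {a b : ℕ} (h : a ∣ b) (x : R) :
    ‖(b : R) * x‖ ≤ ‖(a : R) * x‖ := by
  obtain ⟨c, rfl⟩ := h
  calc ‖((a * c : ℕ) : R) * x‖ = ‖(c : R) * ((a : R) * x)‖ := by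
        rw [Nat.cast_mul, Nat.cast_comm, mul_assoc]
    _ ≤ ‖(c : R)‖ * ‖(a : R) * x‖ := norm_mul_le _ _
    _ ≤ ‖(a : R) * x‖ := mul_le_of_le_one_left (norm_nonneg _) (norm_natCast_le_one R c)

theorem Nat.factorial_dvd_factorial_mul_ascFactorial {b k : ℕ} (h : b ≤ k) (i : ℕ) :
    (b + i)! ∣ k ! * (b + 1).ascFactorial i := by
  rw [← Nat.factorial_mul_ascFactorial]
  exact Nat.mul_dvd_mul_right (Nat.factorial_dvd_factorial h) _

theorem Nat.sub_one_mul_le_of_pow_dvd_factorial {p : ℕ} [Fact p.Prime] {n T : ℕ}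
    (h : p ^ T ∣ n !) : (p - 1) * T ≤ n := by
  have hT : T ≤ padicValNat p n ! := (padicValNat_dvd_iff_le (Nat.factorial_ne_zero n)).mp h
  calc (p - 1) * T ≤ (p - 1) * padicValNat p n ! := Nat.mul_le_mul_left _ hT
    _ = n - (p.digits n).sum := sub_one_mul_padicValNat_factorial n
    _ ≤ n := Nat.sub_le _ _

namespace Padic

variable {p : ℕ} [Fact p.Prime]

theorem norm_le_mul_zpow_of_valuation_add_le {x y : ℚ_[p]} (hx : x ≠ 0) {n : ℤ}
    (h : y = 0 ∨ x.valuation + n ≤ y.valuation) : ‖y‖ ≤ ‖x‖ * (p : ℝ) ^ (-n) := by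
  have hp : (1 : ℝ) < p := by exact_mod_cast (Fact.out : p.Prime).one_lt
  rcases eq_or_ne y 0 with rfl | hy
  · rw [norm_zero]; positivity
  replace h := h.resolve_left hy
  rw [norm_eq_zpow_neg_valuation hx, norm_eq_zpow_neg_valuation hy, ← zpow_add₀ (by positivity)]
  exact zpow_le_zpow_right₀ hp.le (by omega)

theorem norm_le_norm_of_valuation_le {x y : ℚ_[p]} (hx : x ≠ 0)
    (h : y = 0 ∨ x.valuation ≤ y.valuation) : ‖y‖ ≤ ‖x‖ := by
  simpa using norm_le_mul_zpow_of_valuation_add_le hx (n := 0) (by simpa using h)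

theorem pow_dvd_of_norm_natCast_mul_le {x : ℚ_[p]} (hx : x ≠ 0) {n T : ℕ}
    (h : ‖(n : ℚ_[p]) * x‖ ≤ ‖x‖ * (p : ℝ) ^ (-(T : ℤ))) : p ^ T ∣ n := by
  rw [norm_mul, mul_comm ‖x‖] at h
  have hn : ‖((n : ℤ) : ℚ_[p])‖ ≤ (p : ℝ) ^ (-(T : ℤ)) := by
    exact_mod_cast le_of_mul_le_mul_right h (norm_pos_iff.mpr hx)
  exact_mod_cast (norm_int_le_pow_iff_dvd _ _).mp hn

end Padic

theorem lt_one_add_div_mul_inv_log_mul {p M A : ℕ} (hp : 3 ≤ p) (hM : 0 < M)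
    (h : (p - 1) * (M - A) ≤ M) :
    (M : ℝ) < (1 + ((p : ℝ) - 1) / ((p : ℝ) - 2) * (1 / Real.log p)) * A := by
  have hp' : (3 : ℝ) ≤ p := by exact_mod_cast hp
  have hM' : (0 : ℝ) < M := by exact_mod_cast hM
  have hreal : ((p : ℝ) - 1) * (M - A) ≤ M := calc
    ((p : ℝ) - 1) * (M - A) ≤ ((p : ℝ) - 1) * ((M - A : ℕ) : ℝ) := by
        gcongr
        · linarith
        · rw [sub_le_iff_le_add]; exact_mod_cast le_tsub_add
    _ = (((p - 1) * (M - A) : ℕ) : ℝ) := by push_cast [Nat.cast_sub (by omega : 1 ≤ p)]; rfl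
    _ ≤ M := by exact_mod_cast h
  have hp2 : (0 : ℝ) < p - 2 := by linarith
  have hlog : 0 < Real.log p := Real.log_pos (by linarith)
  have hlog' : Real.log p < p - 1 := Real.log_lt_sub_one_of_pos (by linarith) (by linarith)
  have hA : (0 : ℝ) < A := by nlinarith
  have hgap : (0 : ℝ) ≤ (p - 1) * A - (p - 2) * M := by linarith
  have hlog_gap : 0 < (p : ℝ) - 1 - Real.log p := by linarith
  rw [← sub_pos]
  have key : (1 + ((p : ℝ) - 1) / (p - 2) * (1 / Real.log p)) * A - M =
      (Real.log p * ((p - 1) * A - (p - 2) * M) + (p - 1 - Real.log p) * A) /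
        ((p - 2) * Real.log p) := by
    field_simp
    ring
  rw [key]
  refine div_pos ?_ (by positivity)
  positivity

section DiffOp

variable {p : ℕ} [Fact p.Prime] {N : ℕ} {g : ℕ → ℚ_[p]⟦X⟧} {G : ℚ_[p]⟦X⟧}

theorem coeff_diffOpApply (k : ℕ) :
    coeff k (diffOpApply p N g G) = ∑ z ∈ range (N + 1) ×ˢ antidiagonal k,
      coeff z.2.1 (g z.1) * ((z.2.2 + 1).ascFactorial z.1 * coeff (z.2.2 + z.1) G) := by
  rw [diffOpApply, map_sum, sum_product]
  refine sum_congr rfl fun i _ => ?_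
  rw [coeff_mul]
  exact sum_congr rfl fun z _ => by rw [coeff_iterate_derivative]

theorem norm_coeff_diffOpApply_le {C : ℝ} (hint : ∀ i ≤ N, ∀ m, ‖coeff m (g i)‖ ≤ 1) {k : ℕ}
    (hG : ∀ j ≤ k + N, ‖coeff j G‖ ≤ C) : ‖coeff k (diffOpApply p N g G)‖ ≤ C := by
  rw [coeff_diffOpApply]
  refine IsUltrametricDist.norm_sum_le_of_forall_le_of_nonneg
    ((norm_nonneg _).trans (hG 0 (by omega))) ?_
  rintro ⟨i, a, b⟩ hz
  simp only [mem_product, mem_range, HasAntidiagonal.mem_antidiagonal] at hz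
  dsimp only
  rw [norm_mul, norm_mul]
  calc _ ≤ 1 * (1 * C) := by
        gcongr
        · exact hint i (by omega) a
        · exact IsUltrametricDist.norm_natCast_le_one _ _
        · exact hG _ (by omega)
    _ = C := by ring

theorem norm_factorial_mul_coeff_le_of_nice {C : ℝ} (hint : ∀ i ≤ N, ∀ m, ‖coeff m (g i)‖ ≤ 1)
    (hunit : ‖coeff 0 (g N)‖ = 1) (hD : ∀ k, ‖coeff k (diffOpApply p N g G)‖ ≤ C)
    (hlow : ∀ j < N, ‖(j ! : ℚ_[p]) * coeff j G‖ ≤ C) (j : ℕ) :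
    ‖(j ! : ℚ_[p]) * coeff j G‖ ≤ C := by
  induction j using Nat.strong_induction_on with
  | _ j ih =>
  obtain hj | ⟨k, rfl⟩ : j < N ∨ ∃ k, j = k + N :=
    (lt_or_ge j N).imp_right fun h => ⟨j - N, by omega⟩
  · exact hlow j hj
  let t : ℕ × ℕ × ℕ → ℚ_[p] := fun z => coeff z.2.1 (g z.1) *
    (((k ! * (z.2.2 + 1).ascFactorial z.1 : ℕ) : ℚ_[p]) * coeff (z.2.2 + z.1) G)
  have hrow : (k ! : ℚ_[p]) * coeff k (diffOpApply p N g G) =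
      ∑ z ∈ range (N + 1) ×ˢ antidiagonal k, t z := by
    rw [coeff_diffOpApply, mul_sum]
    refine sum_congr rfl fun z _ => ?_
    simp only [t, Nat.cast_mul]
    ring
  have hlead : ‖t (N, 0, k)‖ = ‖((k + N)! : ℚ_[p]) * coeff (k + N) G‖ := by
    simp only [t, norm_mul, hunit, one_mul, Nat.factorial_mul_ascFactorial]
  have hmem : (N, 0, k) ∈ range (N + 1) ×ˢ antidiagonal k := by
    simp [HasAntidiagonal.mem_antidiagonal]
  rw [← hlead]
  refine IsUltrametricDist.norm_le_of_norm_sum_le hmem ?_ ?_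
  · rw [← hrow, norm_mul]
    exact (mul_le_of_le_one_left (norm_nonneg _)
      (IsUltrametricDist.norm_natCast_le_one _ _)).trans (hD k)
  rintro ⟨i, a, b⟩ hz
  simp only [mem_erase, ne_eq, mem_product, mem_range, HasAntidiagonal.mem_antidiagonal,
    Prod.mk.injEq] at hz
  calc ‖t (i, a, b)‖
      = ‖coeff a (g i)‖ * ‖((k ! * (b + 1).ascFactorial i : ℕ) : ℚ_[p]) * coeff (b + i) G‖ :=
        norm_mul _ _
    _ ≤ ‖(((b + i)! : ℕ) : ℚ_[p]) * coeff (b + i) G‖ :=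
        (mul_le_of_le_one_left (norm_nonneg _) (hint i (by omega) a)).trans
          (IsUltrametricDist.norm_natCast_mul_le_of_dvd
            (Nat.factorial_dvd_factorial_mul_ascFactorial (by omega) i) _)
    _ ≤ C := ih _ (by omega)

end DiffOp

theorem newton_polygon_bound_of_nice_diffOp_general (p : ℕ) [Fact p.Prime] (hp3 : 3 ≤ p)
    (G : PowerSeries ℚ_[p]) (N : ℕ) (g : ℕ → PowerSeries ℚ_[p])
    (hnice_int : ∀ i ≤ N, ∀ m, ‖PowerSeries.coeff (R := ℚ_[p]) m (g i)‖ ≤ 1)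
    (hnice_unit : ‖PowerSeries.coeff (R := ℚ_[p]) 0 (g N)‖ = 1)
    (M : ℕ) (hM : 2 ≤ M)
    (hMne : PowerSeries.coeff (R := ℚ_[p]) M G ≠ 0)
    (hslope_le : ∀ j ≤ M, PowerSeries.coeff (R := ℚ_[p]) j G = 0 ∨
      (PowerSeries.coeff (R := ℚ_[p]) M G).valuation + ((M : ℤ) - (j : ℤ)) ≤
        (PowerSeries.coeff (R := ℚ_[p]) j G).valuation)
    (s : ℕ)
    (hs_ne : PowerSeries.coeff (R := ℚ_[p]) s (diffOpApply p N g G) ≠ 0)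
    (hs_min : ∀ j, PowerSeries.coeff (R := ℚ_[p]) j (diffOpApply p N g G) ≠ 0 →
      (PowerSeries.coeff (R := ℚ_[p]) s (diffOpApply p N g G)).valuation ≤
        (PowerSeries.coeff (R := ℚ_[p]) j (diffOpApply p N g G)).valuation) :
    (M : ℝ) < (1 + ((p : ℝ) - 1) / ((p : ℝ) - 2) * (1 / Real.log p)) * ((N : ℝ) + (s : ℝ)) := by
  have hleg : (p - 1) * (M - (N + s)) ≤ M := by
    rcases le_or_gt (N + s) M with hle | hlt
    · set C := ‖coeff M G‖ * (p : ℝ) ^ (-((M - (N + s) : ℕ) : ℤ))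
      have hp : (1 : ℝ) ≤ p := by exact_mod_cast (Fact.out : p.Prime).one_le
      have hGC : ∀ j ≤ s + N, ‖coeff j G‖ ≤ C := fun j hj =>
        (Padic.norm_le_mul_zpow_of_valuation_add_le hMne (hslope_le j (by omega))).trans <|
          mul_le_mul_of_nonneg_left (zpow_le_zpow_right₀ hp (by omega)) (norm_nonneg _)
      have hDC : ∀ k, ‖coeff k (diffOpApply p N g G)‖ ≤ C := fun k =>
        (Padic.norm_le_norm_of_valuation_le hs_ne (or_iff_not_imp_left.mpr (hs_min k))).trans
          (norm_coeff_diffOpApply_le hnice_int hGC)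
      have hlow : ∀ j < N, ‖(j ! : ℚ_[p]) * coeff j G‖ ≤ C := fun j hj =>
        (norm_mul_le _ _).trans <| (mul_le_of_le_one_left (norm_nonneg _)
          (IsUltrametricDist.norm_natCast_le_one _ _)).trans (hGC j (by omega))
      exact Nat.sub_one_mul_le_of_pow_dvd_factorial <| Padic.pow_dvd_of_norm_natCast_mul_le hMne <|
        norm_factorial_mul_coeff_le_of_nice hnice_int hnice_unit hDC hlow M
    · simp [Nat.sub_eq_zero_of_le hlt.le]
  exact_mod_cast lt_one_add_div_mul_inv_log_mul hp3 (by omega) hleg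

/-- key unnamed Lemma at the end of Section 3 of Balakrishnan–Dogra,
"An effective Chabauty–Kim theorem".
Let `p ≥ 3` be prime, `G ∈ ℚ_p[[x]]`, and `D = Σ_{i=0}^N g_i (d/dx)^i` a nice differential
operator of order `N` (all coefficients of each `g_i` lie in `ℤ_p`, and the constant
coefficient of `g_N` is a `p`-adic unit).  Let `M ≥ 2` be the length of the slope `≤ −1`
part of the Newton polygon of `G`.  If the valuations of the nonzero coefficients of `D(G)`
attain a minimum, first attained at index `s`, then `M < κ_p · (N + s)`. -/
theorem newton_polygon_bound_of_nice_diffOp (p : ℕ) [Fact p.Prime] (hp3 : 3 ≤ p)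
    (G : PowerSeries ℚ_[p]) (N : ℕ) (g : ℕ → PowerSeries ℚ_[p])
    (hnice_int : ∀ i ≤ N, ∀ m, ‖PowerSeries.coeff (R := ℚ_[p]) m (g i)‖ ≤ 1)
    (hnice_unit : ‖PowerSeries.coeff (R := ℚ_[p]) 0 (g N)‖ = 1)
    (M : ℕ) (hM : 2 ≤ M)
    (hMne : PowerSeries.coeff (R := ℚ_[p]) M G ≠ 0)
    (hslope_le : ∀ j ≤ M, PowerSeries.coeff (R := ℚ_[p]) j G = 0 ∨
      (PowerSeries.coeff (R := ℚ_[p]) M G).valuation + ((M : ℤ) - (j : ℤ)) ≤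
        (PowerSeries.coeff (R := ℚ_[p]) j G).valuation)
    (hslope_gt : ∀ j, M < j → PowerSeries.coeff (R := ℚ_[p]) j G ≠ 0 →
      (PowerSeries.coeff (R := ℚ_[p]) M G).valuation - ((j : ℤ) - (M : ℤ)) <
        (PowerSeries.coeff (R := ℚ_[p]) j G).valuation)
    (s : ℕ)
    (hs_ne : PowerSeries.coeff (R := ℚ_[p]) s (diffOpApply p N g G) ≠ 0)
    (hs_min : ∀ j, PowerSeries.coeff (R := ℚ_[p]) j (diffOpApply p N g G) ≠ 0 →
      (PowerSeries.coeff (R := ℚ_[p]) s (diffOpApply p N g G)).valuation ≤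
        (PowerSeries.coeff (R := ℚ_[p]) j (diffOpApply p N g G)).valuation)
    (hs_least : ∀ j < s, PowerSeries.coeff (R := ℚ_[p]) j (diffOpApply p N g G) ≠ 0 →
      (PowerSeries.coeff (R := ℚ_[p]) s (diffOpApply p N g G)).valuation <
        (PowerSeries.coeff (R := ℚ_[p]) j (diffOpApply p N g G)).valuation) :
    (M : ℝ) < (1 + ((p : ℝ) - 1) / ((p : ℝ) - 2) * (1 / Real.log p)) * ((N : ℝ) + (s : ℝ)) :=
  newton_polygon_bound_of_nice_diffOp_general p hp3 G N g hnice_int hnice_unit M hM hMne hslope_le s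
    hs_ne hs_min
end

section
/- Let K be a field of characteristic zero and let g ≥ 1. Let u ∈ K[[t]] be an even power series (all coefficients of odd powers of t vanish) such that u − u(0) has order exactly 2 (its coefficient of t² is nonzero), and let e ∈ K[[t]] be an even power series with nonzero constant coefficient. Let δ := e·(d/dt) be the corresponding derivation of K[[t]]. Then the (2g+1) × (2g+1) matrix over K whose (i,j) entry, for 0 ≤ i, j ≤ 2g, is the constant coefficient of (1/(2i)!)·δ^{2i}(u^j), has nonzero determinant. -/
/-!
Write `u = c + t² w` with `w(0) ≠ 0`. Expanding `(c + t² w)ʲ` binomially factors the matrix of `u`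
as the matrix of `t² w` times a unipotent upper triangular matrix, so `c` does not affect the
determinant. For `t² w`, entry `(i, j)` is the constant term of `δ^{2i}(t^{2j} wʲ)`; as `δ` lowers
the order of vanishing of `tᵐ G` by one and multiplies the leading coefficient by `m · e(0)`, this
vanishes for `j > i` and equals `(2i)! e(0)^{2i} w(0)ⁱ` for `j = i`.
-/

open PowerSeries

open scoped Nat

namespace PowerSeries

variable {R : Type*} [CommSemiring R]

theorem exists_eq_X_pow_mul_of_order_eq {f : R⟦X⟧} {n : ℕ} (h : f.order = n) :
    ∃ w : R⟦X⟧, constantCoeff w ≠ 0 ∧ f = X ^ n * w := by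
  refine ⟨divXPowOrder f, ?_, ?_⟩
  · rw [constantCoeff_divXPowOrder, h, ENat.toNat_natCast]
    exact (order_eq_nat.mp h).1
  · conv_lhs => rw [← X_pow_order_mul_divXPowOrder (f := f), h, ENat.toNat_natCast]

theorem derivative_X_pow_succ_mul (n : ℕ) (G : R⟦X⟧) :
    derivative R (X ^ (n + 1) * G) = X ^ n * ((n + 1 : R⟦X⟧) * G + X * derivative R G) := by
  rw [Derivation.leibniz, derivative_pow, derivative_X]
  simp only [smul_eq_mul, add_tsub_cancel_right, Nat.cast_add, Nat.cast_one]
  ring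

theorem constantCoeff_iterate_mul_derivative_X_pow_mul (e G : R⟦X⟧) (n : ℕ) :
    constantCoeff ((fun F => e * derivative R F)^[n] (X ^ n * G)) =
      n ! * constantCoeff e ^ n * constantCoeff G := by
  induction n generalizing G with
  | zero => simp
  | succ n ih =>
    rw [Function.iterate_succ_apply, derivative_X_pow_succ_mul, mul_left_comm, ih]
    simp [Nat.factorial_succ]
    ring

theorem constantCoeff_iterate_mul_derivative_X_pow_mul_of_lt (e G : R⟦X⟧) {m n : ℕ}
    (h : m < n) : constantCoeff ((fun F => e * derivative R F)^[m] (X ^ n * G)) = 0 := by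
  obtain ⟨k, rfl⟩ := Nat.exists_eq_add_of_lt h
  rw [add_assoc, pow_add, mul_assoc, constantCoeff_iterate_mul_derivative_X_pow_mul]
  simp

end PowerSeries

theorem Matrix.det_of_apply_add_algebraMap_pow {R A : Type*} [CommRing R] [CommRing A]
    [Algebra R A] {n : ℕ} (L : Fin n → A →ₗ[R] R) (x : A) (c : R) :
    (Matrix.of fun i j : Fin n => L i ((x + algebraMap R A c) ^ (j : ℕ))).det =
      (Matrix.of fun i j : Fin n => L i (x ^ (j : ℕ))).det := by
  let P : Matrix (Fin n) (Fin n) R := of fun k j => c ^ ((j : ℕ) - k) * ((j : ℕ).choose k : R)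
  have hP : P.det = 1 := by
    rw [det_of_isUpperTriangular]
    · simp [P]
    · intro j k hkj
      simp [P, Nat.choose_eq_zero_of_lt (show (k : ℕ) < j from hkj)]
  have hterm (i : Fin n) (j k : ℕ) :
      L i (x ^ k * algebraMap R A c ^ (j - k) * (j.choose k : A)) =
        L i (x ^ k) * (c ^ (j - k) * j.choose k) := by
    rw [← map_pow, ← map_natCast (algebraMap R A), mul_assoc, ← map_mul, mul_comm,
      ← Algebra.smul_def, map_smul, smul_eq_mul, mul_comm]
  have hfac : (of fun i j : Fin n => L i ((x + algebraMap R A c) ^ (j : ℕ))) =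
      (of fun i j : Fin n => L i (x ^ (j : ℕ))) * P := by
    ext i j
    simp only [of_apply, mul_apply, P, add_pow, map_sum, hterm]
    rw [Fin.sum_univ_eq_sum_range
      (fun k => L i (x ^ k) * (c ^ ((j : ℕ) - k) * (j : ℕ).choose k))]
    refine Finset.sum_subset (Finset.range_subset_range.mpr j.isLt) fun k _ hk => ?_
    rw [Finset.mem_range, not_lt] at hk
    simp [Nat.choose_eq_zero_of_lt hk]
  rw [hfac, det_mul, hP, mul_one]

section EvenTaylorCoeff

variable {K : Type*} [Field K]

/-- The matrix `B` of the paper, for `δ = e · d/dt`. -/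
noncomputable def evenTaylorCoeffMatrix (e : K⟦X⟧) (n : ℕ) (x : K⟦X⟧) :
    Matrix (Fin n) (Fin n) K :=
  Matrix.of fun i j => constantCoeff (C (((2 * (i : ℕ))! : K)⁻¹) *
    (fun G => e * derivative K G)^[2 * (i : ℕ)] (x ^ (j : ℕ)))

theorem det_evenTaylorCoeffMatrix_add_C (e x : K⟦X⟧) (n : ℕ) (c : K) :
    (evenTaylorCoeffMatrix e n (x + C c)).det = (evenTaylorCoeffMatrix e n x).det := by
  let δ : Module.End K K⟦X⟧ := LinearMap.mulLeft K e ∘ₗ (derivative K).toLinearMap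
  let L (i : Fin n) : K⟦X⟧ →ₗ[K] K := ((2 * (i : ℕ))! : K)⁻¹ • (coeff 0 ∘ₗ δ ^ (2 * (i : ℕ)))
  have hL (y : K⟦X⟧) :
      evenTaylorCoeffMatrix e n y = Matrix.of fun i (j : Fin n) => L i (y ^ (j : ℕ)) := by
    ext i j
    simp only [evenTaylorCoeffMatrix, L, δ, Matrix.of_apply, map_mul, constantCoeff_C,
      LinearMap.smul_apply, LinearMap.comp_apply, Module.End.coe_pow,
      coeff_zero_eq_constantCoeff_apply, smul_eq_mul]
    rfl
  rw [hL, hL, ← algebraMap_eq, Matrix.det_of_apply_add_algebraMap_pow]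

theorem det_evenTaylorCoeffMatrix_X_sq_mul [CharZero K] (e w : K⟦X⟧) (n : ℕ) :
    (evenTaylorCoeffMatrix e n (X ^ 2 * w)).det =
      ∏ i : Fin n, constantCoeff e ^ (2 * (i : ℕ)) * constantCoeff w ^ (i : ℕ) := by
  have hpow (j : ℕ) : (X ^ 2 * w) ^ j = X ^ (2 * j) * w ^ j := by rw [mul_pow, ← pow_mul]
  rw [Matrix.det_of_isLowerTriangular]
  · refine Finset.prod_congr rfl fun i _ => ?_
    rw [evenTaylorCoeffMatrix, Matrix.of_apply, hpow, map_mul, constantCoeff_C,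
      constantCoeff_iterate_mul_derivative_X_pow_mul, map_pow, ← mul_assoc, ← mul_assoc,
      inv_mul_cancel₀ (Nat.cast_ne_zero.mpr (Nat.factorial_ne_zero _)), one_mul]
  · intro i j hij
    rw [evenTaylorCoeffMatrix, Matrix.of_apply, hpow, map_mul,
      constantCoeff_iterate_mul_derivative_X_pow_mul_of_lt _ _ (by simpa using hij), mul_zero]

end EvenTaylorCoeff

theorem weierstrass_wronskian_det_ne_zero_general (K : Type*) [Field K] [CharZero K]
    (g : ℕ) (u e : PowerSeries K)
    (hu_ord : (u - PowerSeries.C (PowerSeries.constantCoeff u)).order = 2)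
    (he0 : PowerSeries.constantCoeff e ≠ 0) :
    Matrix.det (Matrix.of fun i j : Fin (2 * g + 1) =>
      PowerSeries.constantCoeff
        (PowerSeries.C (((2 * (i : ℕ)).factorial : K)⁻¹) *
          (fun G => e * PowerSeries.derivative K G)^[2 * (i : ℕ)] (u ^ (j : ℕ)))) ≠ 0 := by
  obtain ⟨w, hw0, hw⟩ := exists_eq_X_pow_mul_of_order_eq hu_ord
  change (evenTaylorCoeffMatrix e (2 * g + 1) u).det ≠ 0
  rw [← sub_add_cancel u (C (constantCoeff u)), hw, det_evenTaylorCoeffMatrix_add_C,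
    det_evenTaylorCoeffMatrix_X_sq_mul]
  exact Finset.prod_ne_zero_iff.mpr fun i _ => mul_ne_zero (pow_ne_zero _ he0) (pow_ne_zero _ hw0)

/-- local power-series content of the Lemma of Section 5.2 of
Balakrishnan–Dogra, "An effective Chabauty–Kim theorem".
Let `K` be a field of characteristic zero and `g ≥ 1`.  Let `u ∈ K[[t]]` be an even power
series with `u − u(0)` of order exactly `2`, and let `e ∈ K[[t]]` be an even power series
with nonzero constant coefficient.  Let `δ := e·(d/dt)`.  Then the `(2g+1) × (2g+1)` matrix
over `K` whose `(i,j)` entry is the constant coefficient of `(1/(2i)!)·δ^{2i}(u^j)` has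
nonzero determinant. -/
theorem weierstrass_wronskian_det_ne_zero (K : Type*) [Field K] [CharZero K]
    (g : ℕ) (hg : 1 ≤ g) (u e : PowerSeries K)
    (hu_even : ∀ m : ℕ, Odd m → PowerSeries.coeff m u = 0)
    (hu_ord : (u - PowerSeries.C (PowerSeries.constantCoeff u)).order = 2)
    (he_even : ∀ m : ℕ, Odd m → PowerSeries.coeff m e = 0)
    (he0 : PowerSeries.constantCoeff e ≠ 0) :
    Matrix.det (Matrix.of fun i j : Fin (2 * g + 1) =>
      PowerSeries.constantCoeff
        (PowerSeries.C (((2 * (i : ℕ)).factorial : K)⁻¹) *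
          (fun G => e * PowerSeries.derivative K G)^[2 * (i : ℕ)] (u ^ (j : ℕ)))) ≠ 0 :=
  weierstrass_wronskian_det_ne_zero_general K g u e hu_ord he0
end
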